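/- arXiv:2505.03687 — 2 statements merged into one kernel-verified Lean document; each statement's English description precedes it below -/
import Mathlib

section
/- Let L be a maximal dissipative operator and M a dissipative operator with Dom(M) ⊆ Dom(L) such that K = M − L satisfies ‖Kv‖ ≤ c‖v‖ + d‖Lv‖ for all v ∈ Dom(L), with c > 0 and 0 < d < 1/2. Then M is a maximal dissipative operator. In particular, for κ > 0 with (2 + c/κ)d < 1, the operator M + iκI has a bounded everywhere-defined inverse. -/
/-!
Dissipativity gives `κ ‖v‖ ≤ ‖(T + iκ) v‖`, so `T + iκ` is injective with a left inverse of
norm at most `κ⁻¹`. Perturbing `T + iκ₀` by `i(κ - κ₀)` then shows that surjectivity of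
`T + iκ` propagates from `κ₀` to all of `(0, 2κ₀)`, hence to every `κ > 0`. For `L` and large
`κ` the same estimate makes `K` small relative to `L + iκ`:
`‖K v‖ ≤ (c/κ + 2d) ‖(L + iκ) v‖` with `c/κ + 2d < 1`, so
`M + iκ = (1 + K (L + iκ)⁻¹)(L + iκ)` is surjective by a Neumann series, and dissipativity of
`M` carries this to every `κ > 0`.
-/

variable {H : Type*} [NormedAddCommGroup H] [InnerProductSpace ℂ H] [CompleteSpace H]

/-- `L` is dissipative: `Im ⟨Lv, v⟩ ≥ 0` for all `v ∈ Dom L` (inner product linear in the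
first argument). -/
def IsDissipative (L : H →ₗ.[ℂ] H) : Prop :=
  ∀ v : L.domain, 0 ≤ (inner ℂ ((v : H)) (L v) : ℂ).im

/-- `L` is maximal dissipative: it is densely defined, dissipative, and `L + iI` is surjective
(equivalently, `L` has no proper dissipative extension). -/
def IsMaximalDissipative (L : H →ₗ.[ℂ] H) : Prop :=
  IsDissipative L ∧ Dense (L.domain : Set H) ∧
    ∀ y : H, ∃ v : L.domain, L v + Complex.I • (v : H) = y

open Function

theorem LinearMap.surjective_add_of_norm_le_mul_norm {𝕜 D E : Type*} [NontriviallyNormedField 𝕜]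
    [AddCommGroup D] [Module 𝕜 D] [NormedAddCommGroup E] [NormedSpace 𝕜 E] [CompleteSpace E]
    {A P : D →ₗ[𝕜] E} (hA : Surjective A) {ρ : ℝ} (hρ : ρ < 1)
    (hP : ∀ v, ‖P v‖ ≤ ρ * ‖A v‖) : Surjective (A + P) := by
  -- `A + P = (1 + P R) A` for a linear right inverse `R` of `A`, and `‖P R‖ ≤ ρ < 1`.
  obtain ⟨R, hAR⟩ := A.exists_rightInverse_of_surjective (LinearMap.range_eq_top.mpr hA)
  have hAR' (z : E) : A (R z) = z := LinearMap.congr_fun hAR z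
  let B : E →L[𝕜] E := (P ∘ₗ R).mkContinuous ρ fun z => by simpa [hAR'] using hP (R z)
  have hB : ‖-B‖ < 1 := by
    rw [norm_neg]
    exact (LinearMap.mkContinuous_norm_le' _ _).trans_lt (max_lt hρ one_pos)
  obtain ⟨u, hu⟩ := isUnit_one_sub_of_norm_lt_one hB
  intro y
  refine ⟨R ((↑u⁻¹ : E →L[𝕜] E) y), ?_⟩
  have hy : (↑u : E →L[𝕜] E) ((↑u⁻¹ : E →L[𝕜] E) y) = y := DFunLike.congr_fun u.mul_inv y
  rw [hu, sub_neg_eq_add] at hy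
  simpa [B, hAR'] using hy

namespace LinearPMap

variable {E : Type*} [AddCommGroup E] [Module ℂ E]

def shift (T : E →ₗ.[ℂ] E) (κ : ℝ) : T.domain →ₗ[ℂ] E :=
  T.toFun + (Complex.I * κ) • T.domain.subtype

@[simp]
theorem shift_apply (T : E →ₗ.[ℂ] E) (κ : ℝ) (v : T.domain) :
    T.shift κ v = T v + (Complex.I * κ) • (v : E) :=
  rfl

theorem surjective_shift_one_iff (T : E →ₗ.[ℂ] E) :
    Surjective (T.shift 1) ↔ ∀ y, ∃ v : T.domain, T v + Complex.I • (v : E) = y := by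
  simp only [Surjective, shift_apply, Complex.ofReal_one, mul_one]

theorem shift_eq_shift_add (T : E →ₗ.[ℂ] E) (κ₀ κ : ℝ) :
    T.shift κ = T.shift κ₀ + (Complex.I * (κ - κ₀ : ℝ)) • T.domain.subtype := by
  ext v
  simp only [shift_apply, LinearMap.add_apply, LinearMap.smul_apply, Submodule.subtype_apply]
  push_cast
  module

end LinearPMap

namespace IsDissipative

variable {E : Type*} [NormedAddCommGroup E] [InnerProductSpace ℂ E] {T : E →ₗ.[ℂ] E} {κ : ℝ}

theorem mul_norm_le_norm_shift (hT : IsDissipative T) (v : T.domain) :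
    κ * ‖(v : E)‖ ≤ ‖T.shift κ v‖ := by
  have him : κ * ‖(v : E)‖ ^ 2 ≤ (inner ℂ (v : E) (T.shift κ v)).im := by
    rw [LinearPMap.shift_apply, inner_add_right, inner_smul_right, inner_self_eq_norm_sq_to_K]
    simp only [Complex.coe_algebraMap, ← Complex.ofReal_pow, Complex.add_im, Complex.mul_im,
      Complex.mul_re, Complex.I_re, Complex.ofReal_re, zero_mul, Complex.I_im, Complex.ofReal_im,
      mul_zero, sub_self, one_mul, zero_add, le_add_iff_nonneg_left]
    exact hT v
  have hCS : κ * ‖(v : E)‖ ^ 2 ≤ ‖(v : E)‖ * ‖T.shift κ v‖ :=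
    him.trans ((Complex.im_le_norm _).trans (norm_inner_le_norm _ _))
  rcases (norm_nonneg (v : E)).eq_or_lt with hv | hv
  · rw [← hv, mul_zero]
    exact norm_nonneg _
  · nlinarith

theorem shift_injective (hT : IsDissipative T) (hκ : 0 < κ) : Injective (T.shift κ) := by
  refine (injective_iff_map_eq_zero _).mpr fun v hv => ?_
  have := hT.mul_norm_le_norm_shift (κ := κ) v
  rw [hv, norm_zero] at this
  exact Subtype.ext (norm_le_zero_iff.mp (nonpos_of_mul_nonpos_right this hκ))

theorem exists_resolvent (hT : IsDissipative T) (hκ : 0 < κ) (hs : Surjective (T.shift κ)) :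
    ∃ R : E →L[ℂ] E, ∀ v : T.domain, R (T.shift κ v) = v := by
  let e := LinearEquiv.ofBijective (T.shift κ) ⟨hT.shift_injective hκ, hs⟩
  have hbound (y : E) : ‖T.domain.subtype (e.symm y)‖ ≤ κ⁻¹ * ‖y‖ := by
    have := hT.mul_norm_le_norm_shift (κ := κ) (e.symm y)
    rw [show T.shift κ (e.symm y) = y from e.apply_symm_apply y] at this
    rwa [inv_mul_eq_div, le_div_iff₀' hκ]
  refine ⟨(T.domain.subtype ∘ₗ e.symm.toLinearMap).mkContinuous κ⁻¹ hbound, fun v => ?_⟩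
  exact congrArg Subtype.val (e.symm_apply_apply v)

theorem norm_le_mul_norm_shift_of_relBound (hT : IsDissipative T) {c d : ℝ} (hκ : 0 < κ)
    (hc : 0 ≤ c) (hd : 0 ≤ d) {K : T.domain → E}
    (hK : ∀ v, ‖K v‖ ≤ c * ‖(v : E)‖ + d * ‖T v‖) (v : T.domain) :
    ‖K v‖ ≤ (c / κ + 2 * d) * ‖T.shift κ v‖ := by
  have hv : κ * ‖(v : E)‖ ≤ ‖T.shift κ v‖ := hT.mul_norm_le_norm_shift v
  have hTv : ‖T v‖ ≤ ‖T.shift κ v‖ + κ * ‖(v : E)‖ := by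
    have : T v = T.shift κ v - (Complex.I * κ) • (v : E) := by simp
    rw [this]
    refine (norm_sub_le _ _).trans_eq ?_
    rw [norm_smul, norm_mul, Complex.norm_I, one_mul, Complex.norm_real, Real.norm_of_nonneg hκ.le]
  calc ‖K v‖ ≤ c * ‖(v : E)‖ + d * ‖T v‖ := hK v
    _ ≤ c * (‖T.shift κ v‖ / κ) + d * (2 * ‖T.shift κ v‖) := by
        gcongr
        · rwa [le_div_iff₀' hκ]
        · linarith
    _ = (c / κ + 2 * d) * ‖T.shift κ v‖ := by ring

variable [CompleteSpace E]

theorem shift_surjective_of_lt_two_mul (hT : IsDissipative T) {κ₀ : ℝ} (hκ₀ : 0 < κ₀)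
    (hs : Surjective (T.shift κ₀)) (hκ : 0 < κ) (hlt : κ < 2 * κ₀) : Surjective (T.shift κ) := by
  rw [T.shift_eq_shift_add κ₀ κ]
  refine LinearMap.surjective_add_of_norm_le_mul_norm hs (ρ := |κ - κ₀| / κ₀)
    ((div_lt_one hκ₀).mpr (abs_sub_lt_iff.mpr ⟨by linarith, by linarith⟩)) fun v => ?_
  have hnorm : ‖(Complex.I * (κ - κ₀ : ℝ)) • (v : E)‖ = |κ - κ₀| * ‖(v : E)‖ := by
    rw [norm_smul, norm_mul, Complex.norm_I, one_mul, Complex.norm_real, Real.norm_eq_abs]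
  calc ‖((Complex.I * (κ - κ₀ : ℝ)) • T.domain.subtype) v‖
      = |κ - κ₀| / κ₀ * (κ₀ * ‖(v : E)‖) := by
        rw [LinearMap.smul_apply, Submodule.subtype_apply, hnorm]
        field_simp
    _ ≤ |κ - κ₀| / κ₀ * ‖T.shift κ₀ v‖ := by
        gcongr
        exact hT.mul_norm_le_norm_shift v

theorem shift_surjective (hT : IsDissipative T) {κ₀ : ℝ} (hκ₀ : 0 < κ₀)
    (hs : Surjective (T.shift κ₀)) (hκ : 0 < κ) : Surjective (T.shift κ) := by
  have hpow (n : ℕ) : ∀ κ, 0 < κ → κ < (3 / 2) ^ n * κ₀ → Surjective (T.shift κ) := by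
    induction n with
    | zero => exact fun κ hκ hlt => hT.shift_surjective_of_lt_two_mul hκ₀ hs hκ (by linarith)
    | succ n ih =>
      intro κ hκ hlt
      have hκ' : 2 / 3 * κ < (3 / 2) ^ n * κ₀ := by rw [pow_succ] at hlt; linarith
      exact hT.shift_surjective_of_lt_two_mul (by positivity) (ih _ (by positivity) hκ') hκ
        (by linarith)
  obtain ⟨n, hn⟩ := pow_unbounded_of_one_lt (κ / κ₀) (by norm_num : (1 : ℝ) < 3 / 2)
  exact hpow n κ hκ ((div_lt_iff₀ hκ₀).mp hn)

end IsDissipative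

/-- Let `L` be maximal dissipative and `M` a dissipative operator with `Dom M = Dom L`,
`M = L + K` where `‖Kv‖ ≤ c‖v‖ + d‖Lv‖` on `Dom L` with `c > 0` and `0 < d < 1/2`.  Then `M` is
maximal dissipative; in particular, for every `κ > 0` with `(2 + c/κ)d < 1`, the operator
`M + iκI` has a bounded everywhere-defined inverse. -/
theorem maximal_of_strictly_dominated_perturbation (L K M : H →ₗ.[ℂ] H)
    (hL : IsMaximalDissipative L)
    (hdomK : L.domain ≤ K.domain) (hdomM : M.domain = L.domain)
    (hM : ∀ (v : H) (hv : v ∈ L.domain) (hv' : v ∈ M.domain),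
      M ⟨v, hv'⟩ = L ⟨v, hv⟩ + K ⟨v, hdomK hv⟩)
    (hMdis : IsDissipative M)
    (c d : ℝ) (hc : 0 < c) (hd0 : 0 < d) (hd : d < 1 / 2)
    (hKb : ∀ v : L.domain, ‖K ⟨(v : H), hdomK v.2⟩‖ ≤ c * ‖(v : H)‖ + d * ‖L v‖) :
    IsMaximalDissipative M ∧
      ∀ κ : ℝ, 0 < κ → (2 + c / κ) * d < 1 →
        ∃ Rκ : H →L[ℂ] H,
          (∀ y : H, ∃ h : Rκ y ∈ L.domain,
            L ⟨Rκ y, h⟩ + K ⟨Rκ y, hdomK h⟩ + (Complex.I * κ) • Rκ y = y) ∧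
          ∀ v : L.domain,
            Rκ (L v + K ⟨(v : H), hdomK v.2⟩ + (Complex.I * κ) • (v : H)) = v := by
  obtain ⟨hLdis, hLdense, hLsurj⟩ := hL
  have hd' : 0 < 1 - 2 * d := by linarith
  obtain ⟨κ₀, hκ₀, hρ⟩ : ∃ κ₀ : ℝ, 0 < κ₀ ∧ c / κ₀ + 2 * d < 1 :=
    ⟨2 * c / (1 - 2 * d), by positivity, by field_simp; linarith⟩
  let e := LinearEquiv.ofEq _ _ hdomM.symm
  have hMe (κ : ℝ) (v : L.domain) :
      M.shift κ (e v) = L v + K ⟨v, hdomK v.2⟩ + (Complex.I * κ) • (v : H) := by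
    rw [LinearPMap.shift_apply]
    exact congrArg (· + _) (hM v v.2 _)
  have hLκ₀ : Surjective (L.shift κ₀) :=
    hLdis.shift_surjective one_pos (L.surjective_shift_one_iff.mpr hLsurj) hκ₀
  have hMκ₀ : Surjective (M.shift κ₀) := fun y => by
    obtain ⟨v, rfl⟩ := LinearMap.surjective_add_of_norm_le_mul_norm
      (P := K.toFun ∘ₗ Submodule.inclusion hdomK) hLκ₀ hρ
      (hLdis.norm_le_mul_norm_shift_of_relBound hκ₀ hc.le hd0.le hKb) y
    refine ⟨e v, ?_⟩
    rw [hMe, LinearMap.add_apply, LinearPMap.shift_apply, add_right_comm]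
    rfl
  have hMsurj (κ : ℝ) (hκ : 0 < κ) : Surjective (M.shift κ) := hMdis.shift_surjective hκ₀ hMκ₀ hκ
  refine ⟨⟨hMdis, hdomM ▸ hLdense, M.surjective_shift_one_iff.mp (hMsurj 1 one_pos)⟩,
    fun κ hκ _ => ?_⟩
  obtain ⟨R, hR⟩ := hMdis.exists_resolvent hκ (hMsurj κ hκ)
  refine ⟨R, fun y => ?_, fun v => by rw [← hMe, hR]; rfl⟩
  obtain ⟨v, rfl⟩ := ((hMsurj κ hκ).comp e.surjective) y
  rw [comp_apply, hR]
  exact ⟨v.2, (hMe κ v).symm⟩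
end

section
/- Let {φ_n} be a sequence of bounded Borel functions on ℝ with sup_{x∈ℝ} Σ_n |φ_n(x)|² ≤ M² < ∞, let A be a self-adjoint operator on a Hilbert space H with spectral measure E_A, and let {u_n} be vectors with Σ_n ‖u_n‖² ≤ ε². Then ‖Σ_n φ_n(A) u_n‖ ≤ M·ε, where the series converges weakly. -/
/-!
Write `S` for a finite partial sum `∑ φₙ(A) uₙ`. Testing `S` against itself gives
`‖S‖² ≤ ∑ ‖φₙ(A)* S‖ ‖uₙ‖`, and by Cauchy–Schwarz it remains to bound `∑ ‖φₙ(A)* w‖²`. This sum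
equals `⟪w, (∑ |φₙ|²)(A) w⟫`, because `φₙ(A) φₙ(A)* = |φₙ|²(A)`, hence is at most `M² ‖w‖²`. The
resulting bound `‖S‖² ≤ M² ∑ ‖uₙ‖²` over arbitrary finite index sets makes the series Cauchy in
norm, and passing to the limit gives `‖v‖ ≤ M ε`.
-/

open Finset ContinuousLinearMap

section RowOperator

variable {ι 𝕜 E F : Type*} [RCLike 𝕜] [NormedAddCommGroup E] [InnerProductSpace 𝕜 E]
  [CompleteSpace E] [NormedAddCommGroup F] [InnerProductSpace 𝕜 F] [CompleteSpace F]

theorem sum_norm_sq_adjoint_apply_le (T : ι → E →L[𝕜] F) (s : Finset ι) (w : F) :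
    ∑ i ∈ s, ‖adjoint (T i) w‖ ^ 2 ≤ ‖∑ i ∈ s, T i ∘L adjoint (T i)‖ * ‖w‖ ^ 2 := by
  calc ∑ i ∈ s, ‖adjoint (T i) w‖ ^ 2
      = RCLike.re (inner 𝕜 w ((∑ i ∈ s, T i ∘L adjoint (T i)) w)) := by
        simp only [apply_norm_sq_eq_inner_adjoint_right, adjoint_adjoint,
          FunLike.coe_sum, Finset.sum_apply, inner_sum, map_sum]
    _ ≤ ‖w‖ * ‖(∑ i ∈ s, T i ∘L adjoint (T i)) w‖ := re_inner_le_norm _ _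
    _ ≤ ‖w‖ * (‖∑ i ∈ s, T i ∘L adjoint (T i)‖ * ‖w‖) := by gcongr; exact le_opNorm _ _
    _ = ‖∑ i ∈ s, T i ∘L adjoint (T i)‖ * ‖w‖ ^ 2 := by ring

theorem norm_sum_apply_sq_le (T : ι → E →L[𝕜] F) (s : Finset ι) (u : ι → E) :
    ‖∑ i ∈ s, T i (u i)‖ ^ 2 ≤ ‖∑ i ∈ s, T i ∘L adjoint (T i)‖ * ∑ i ∈ s, ‖u i‖ ^ 2 := by
  set S := ∑ i ∈ s, T i (u i)
  set B := ∑ i ∈ s, T i ∘L adjoint (T i)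
  have hS : ‖S‖ ^ 2 ≤ ∑ i ∈ s, ‖adjoint (T i) S‖ * ‖u i‖ := by
    rw [← inner_self_eq_norm_sq (𝕜 := 𝕜), inner_sum, map_sum]
    refine sum_le_sum fun i _ => ?_
    rw [← adjoint_inner_left]
    exact re_inner_le_norm _ _
  have hS4 : (‖S‖ ^ 2) ^ 2 ≤ (‖B‖ * ‖S‖ ^ 2) * ∑ i ∈ s, ‖u i‖ ^ 2 :=
    calc (‖S‖ ^ 2) ^ 2 ≤ (∑ i ∈ s, ‖adjoint (T i) S‖ * ‖u i‖) ^ 2 := by gcongr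
      _ ≤ (∑ i ∈ s, ‖adjoint (T i) S‖ ^ 2) * ∑ i ∈ s, ‖u i‖ ^ 2 :=
        sum_mul_sq_le_sq_mul_sq _ _ _
      _ ≤ (‖B‖ * ‖S‖ ^ 2) * ∑ i ∈ s, ‖u i‖ ^ 2 := by
        gcongr
        exact sum_norm_sq_adjoint_apply_le T s S
  rcases (pow_nonneg (norm_nonneg S) 2).eq_or_lt with hS0 | hSpos
  · rw [← hS0]
    exact mul_nonneg (norm_nonneg _) (sum_nonneg fun i _ => by positivity)
  · nlinarith

end RowOperator

theorem summable_of_norm_sum_sq_le {ι E : Type*} [NormedAddCommGroup E] [CompleteSpace E]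
    {f : ι → E} {g : ι → ℝ} (hg : Summable g) (K : ℝ)
    (h : ∀ t : Finset ι, ‖∑ i ∈ t, f i‖ ^ 2 ≤ K * ∑ i ∈ t, g i) : Summable f := by
  rw [summable_iff_vanishing_norm]
  intro δ hδ
  obtain ⟨s, hs⟩ := summable_iff_vanishing_norm.1 hg (δ ^ 2 / (|K| + 1)) (by positivity)
  refine ⟨s, fun t ht => ?_⟩
  have hgt : |∑ i ∈ t, g i| * (|K| + 1) < δ ^ 2 := by
    have := hs t ht
    rw [Real.norm_eq_abs] at this
    rwa [lt_div_iff₀ (by positivity)] at this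
  have hft : ‖∑ i ∈ t, f i‖ ^ 2 < δ ^ 2 :=
    calc ‖∑ i ∈ t, f i‖ ^ 2 ≤ K * ∑ i ∈ t, g i := h t
      _ ≤ |K| * |∑ i ∈ t, g i| := by rw [← abs_mul]; exact le_abs_self _
      _ < δ ^ 2 := by nlinarith [abs_nonneg K, abs_nonneg (∑ i ∈ t, g i)]
  exact (pow_lt_pow_iff_left₀ (norm_nonneg _) hδ.le two_ne_zero).1 hft

theorem sum_le_of_forall_sum_range_le {f : ℕ → ℝ} {c : ℝ} (hf : ∀ n, 0 ≤ f n)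
    (h : ∀ n, ∑ i ∈ range n, f i ≤ c) (s : Finset ℕ) : ∑ i ∈ s, f i ≤ c :=
  ((summable_of_sum_range_le hf h).sum_le_tsum s fun n _ => hf n).trans
    (Real.tsum_le_of_sum_range_le hf h)

variable {H : Type*} [NormedAddCommGroup H] [InnerProductSpace ℂ H] [CompleteSpace H]

section FunctionalCalculus

variable {α ι G : Type*} [MeasurableSpace α] [AddCommGroup G]

theorem map_finset_sum_of_map_add (F : (α → ℂ) → G)
    (hadd : ∀ g h : α → ℂ, Measurable g → Measurable h →
      (∃ c, ∀ x, ‖g x‖ ≤ c) → (∃ c, ∀ x, ‖h x‖ ≤ c) → F (g + h) = F g + F h)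
    (s : Finset ι) (f : ι → α → ℂ) (hfm : ∀ i ∈ s, Measurable (f i))
    (hfb : ∀ i ∈ s, ∃ c, ∀ x, ‖f i x‖ ≤ c) :
    F (∑ i ∈ s, f i) = ∑ i ∈ s, F (f i) := by
  induction s using Finset.cons_induction with
  | empty =>
    have h := hadd 0 0 measurable_zero measurable_zero ⟨0, by simp⟩ ⟨0, by simp⟩
    simpa using h
  | cons a s ha ih =>
    simp only [forall_mem_cons] at hfm hfb
    have hsm : Measurable (∑ i ∈ s, f i) := by
      simpa only [← Finset.sum_apply] using Finset.measurable_sum s hfm.2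
    have hsb : ∃ c, ∀ x, ‖(∑ i ∈ s, f i) x‖ ≤ c := by
      choose c hc using hfb.2
      refine ⟨∑ i ∈ s.attach, c i i.2, fun x => ?_⟩
      rw [Finset.sum_apply, ← sum_attach]
      exact (norm_sum_le _ _).trans (sum_le_sum fun i _ => hc i i.2 x)
    rw [sum_cons, sum_cons, hadd _ _ hfm.1 hsm hfb.1 hsb, ih hfm.2 hfb.2]

theorem norm_sum_comp_adjoint_le (FC : (α → ℂ) → (H →L[ℂ] H))
    (hFCadd : ∀ g h : α → ℂ, Measurable g → Measurable h →
      (∃ c, ∀ x, ‖g x‖ ≤ c) → (∃ c, ∀ x, ‖h x‖ ≤ c) → FC (g + h) = FC g + FC h)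
    (hFCmul : ∀ g h : α → ℂ, Measurable g → Measurable h →
      (∃ c, ∀ x, ‖g x‖ ≤ c) → (∃ c, ∀ x, ‖h x‖ ≤ c) →
      FC (g * h) = (FC g).comp (FC h))
    (hFCstar : ∀ h : α → ℂ, Measurable h → (∃ c, ∀ x, ‖h x‖ ≤ c) →
      FC (fun x => starRingEnd ℂ (h x)) = ContinuousLinearMap.adjoint (FC h))
    (hFCnorm : ∀ (h : α → ℂ) (c : ℝ), (∀ x, ‖h x‖ ≤ c) → ‖FC h‖ ≤ c)
    (s : Finset ι) (φ : ι → α → ℂ) (hφm : ∀ i ∈ s, Measurable (φ i)) (K : ℝ)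
    (hφsq : ∀ x, ∑ i ∈ s, ‖φ i x‖ ^ 2 ≤ K) :
    ‖∑ i ∈ s, FC (φ i) ∘L adjoint (FC (φ i))‖ ≤ K := by
  set ρ : ι → α → ℂ := fun i x => ((‖φ i x‖ ^ 2 : ℝ) : ℂ)
  have hφb : ∀ i ∈ s, ∀ x, ‖φ i x‖ ≤ √K := fun i hi x =>
    Real.le_sqrt_of_sq_le <| (single_le_sum (fun j _ => by positivity) hi).trans (hφsq x)
  have hρm : ∀ i ∈ s, Measurable (ρ i) := fun i hi => by have := hφm i hi; fun_prop
  have hρb : ∀ i ∈ s, ∀ x, ‖ρ i x‖ ≤ K := fun i hi x => by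
    simpa [ρ] using (single_le_sum (fun j _ => by positivity) hi).trans (hφsq x)
  have hcomp : ∀ i ∈ s, FC (φ i) ∘L adjoint (FC (φ i)) = FC (ρ i) := fun i hi => by
    rw [← hFCstar _ (hφm i hi) ⟨_, hφb i hi⟩, ← hFCmul _ _ (hφm i hi)
      (by fun_prop) ⟨_, hφb i hi⟩ ⟨_, fun x => by simpa using hφb i hi x⟩]
    congr 1
    ext x
    simp [ρ, Complex.mul_conj, Complex.normSq_eq_norm_sq]
  rw [sum_congr rfl hcomp, ← map_finset_sum_of_map_add FC hFCadd s ρ hρm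
    fun i hi => ⟨K, hρb i hi⟩]
  refine hFCnorm _ K fun x => ?_
  rw [Finset.sum_apply, ← Complex.ofReal_sum, Complex.norm_real,
    Real.norm_of_nonneg (sum_nonneg fun i _ => by positivity)]
  exact hφsq x

end FunctionalCalculus

/-- `FC` is the Borel functional calculus `φ ↦ φ(A)` of the self-adjoint operator `A`. -/
theorem weak_sum_bound_general (FC : (ℝ → ℂ) → (H →L[ℂ] H))
    (hFCadd : ∀ g h : ℝ → ℂ, Measurable g → Measurable h →
      (∃ c, ∀ x, ‖g x‖ ≤ c) → (∃ c, ∀ x, ‖h x‖ ≤ c) → FC (g + h) = FC g + FC h)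
    (hFCmul : ∀ g h : ℝ → ℂ, Measurable g → Measurable h →
      (∃ c, ∀ x, ‖g x‖ ≤ c) → (∃ c, ∀ x, ‖h x‖ ≤ c) →
      FC (g * h) = (FC g).comp (FC h))
    (hFCstar : ∀ h : ℝ → ℂ, Measurable h → (∃ c, ∀ x, ‖h x‖ ≤ c) →
      FC (fun x => starRingEnd ℂ (h x)) = ContinuousLinearMap.adjoint (FC h))
    (hFCnorm : ∀ (h : ℝ → ℂ) (c : ℝ), (∀ x, ‖h x‖ ≤ c) → ‖FC h‖ ≤ c)
    (φ : ℕ → ℝ → ℂ) (hφm : ∀ n, Measurable (φ n))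
    (M ε : ℝ) (hM : 0 ≤ M) (hε : 0 ≤ ε)
    (hφsq : ∀ (x : ℝ) (N : ℕ),
      ∑ n ∈ Finset.range N, ‖φ n x‖ ^ 2 ≤ M ^ 2)
    (u : ℕ → H)
    (hu : ∀ N : ℕ, ∑ n ∈ Finset.range N, ‖u n‖ ^ 2 ≤ ε ^ 2) :
    ∃ v : H,
      (∀ w : H, HasSum (fun n => (inner ℂ w (FC (φ n) (u n)) : ℂ)) (inner ℂ w v)) ∧
        ‖v‖ ≤ M * ε := by
  have hpartial : ∀ s : Finset ℕ,
      ‖∑ n ∈ s, FC (φ n) (u n)‖ ^ 2 ≤ M ^ 2 * ∑ n ∈ s, ‖u n‖ ^ 2 := fun s =>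
    (norm_sum_apply_sq_le _ s u).trans <| mul_le_mul_of_nonneg_right
      (norm_sum_comp_adjoint_le FC hFCadd hFCmul hFCstar hFCnorm s φ (fun n _ => hφm n) _
        fun x => sum_le_of_forall_sum_range_le (fun n => by positivity) (hφsq x) s)
      (sum_nonneg fun n _ => by positivity)
  obtain ⟨v, hv⟩ := summable_of_norm_sum_sq_le
    (summable_of_sum_range_le (fun n => by positivity) hu) _ hpartial
  refine ⟨v, fun w => by simpa using hv.mapL (innerSL ℂ w), ?_⟩
  have hv_sq : ‖v‖ ^ 2 ≤ (M * ε) ^ 2 :=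
    le_of_tendsto' (hv.tendsto_sum_nat.norm.pow 2) fun N =>
      (hpartial _).trans (by rw [mul_pow]; gcongr; exact hu N)
  exact (pow_le_pow_iff_left₀ (norm_nonneg v) (mul_nonneg hM hε) two_ne_zero).1 hv_sq

/-- Let `A` be a self-adjoint operator with Borel functional calculus `FC` (so `FC` is a
norm-contractive star-homomorphism on bounded measurable functions: `φ ↦ φ(A)`).  Let `{φₙ}` be
bounded Borel functions on `ℝ` with `∑ₙ |φₙ(x)|² ≤ M²` pointwise and let `{uₙ}` be vectors with
`∑ₙ ‖uₙ‖² ≤ ε²`.  Then the series `∑ₙ φₙ(A) uₙ` converges weakly to a vector `v` with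
`‖v‖ ≤ M ε`. -/
theorem weak_sum_bound (FC : (ℝ → ℂ) → (H →L[ℂ] H))
    (hFCadd : ∀ g h : ℝ → ℂ, Measurable g → Measurable h →
      (∃ c, ∀ x, ‖g x‖ ≤ c) → (∃ c, ∀ x, ‖h x‖ ≤ c) → FC (g + h) = FC g + FC h)
    (hFCsmul : ∀ (c : ℂ) (h : ℝ → ℂ), Measurable h → (∃ c', ∀ x, ‖h x‖ ≤ c') →
      FC (c • h) = c • FC h)
    (hFCmul : ∀ g h : ℝ → ℂ, Measurable g → Measurable h →
      (∃ c, ∀ x, ‖g x‖ ≤ c) → (∃ c, ∀ x, ‖h x‖ ≤ c) →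
      FC (g * h) = (FC g).comp (FC h))
    (hFCstar : ∀ h : ℝ → ℂ, Measurable h → (∃ c, ∀ x, ‖h x‖ ≤ c) →
      FC (fun x => starRingEnd ℂ (h x)) = ContinuousLinearMap.adjoint (FC h))
    (hFCnorm : ∀ (h : ℝ → ℂ) (c : ℝ), (∀ x, ‖h x‖ ≤ c) → ‖FC h‖ ≤ c)
    (φ : ℕ → ℝ → ℂ) (hφm : ∀ n, Measurable (φ n))
    (M ε : ℝ) (hM : 0 ≤ M) (hε : 0 ≤ ε)
    (hφsq : ∀ (x : ℝ) (N : ℕ),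
      ∑ n ∈ Finset.range N, ‖φ n x‖ ^ 2 ≤ M ^ 2)
    (u : ℕ → H)
    (hu : ∀ N : ℕ, ∑ n ∈ Finset.range N, ‖u n‖ ^ 2 ≤ ε ^ 2) :
    ∃ v : H,
      (∀ w : H, HasSum (fun n => (inner ℂ w (FC (φ n) (u n)) : ℂ)) (inner ℂ w v)) ∧
        ‖v‖ ≤ M * ε :=
  weak_sum_bound_general FC hFCadd hFCmul hFCstar hFCnorm φ hφm M ε hM hε hφsq u hu
end
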